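/- arXiv:2107.11766 — 4 statements merged into one kernel-verified Lean document; each statement's English description precedes it below -/
import Mathlib

section
/- Let p(x) = x^2 + a x + b be an irreducible polynomial over the finite field F_q of characteristic 2 with a ≠ 0. Then x^{q-1} ≡ a b^{-1} x + (a^2 b^{-1} + 1) (mod p(x)). -/
open Polynomial

/-- Let `p(x) = x^2 + a x + b` be an irreducible polynomial over the finite field `F_q`
of characteristic 2 with `a ≠ 0`. Then
`x^{q-1} ≡ a b⁻¹ x + (a^2 b⁻¹ + 1) (mod p(x))`. -/
theorem stmt_2 {Fq : Type*} [Field Fq] [Fintype Fq] [CharP Fq 2] (a b : Fq) (ha : a ≠ 0)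
    (hirr : Irreducible (X ^ 2 + C a * X + C b)) :
    (X ^ 2 + C a * X + C b) ∣
      (X ^ (Fintype.card Fq - 1) - (C (a * b⁻¹) * X + C (a ^ 2 * b⁻¹ + 1))) := by
  classical
  have hb : b ≠ 0 := by
    intro h
    subst h
    have hfac : (X ^ 2 + C a * X + C (0 : Fq)) = X * (X + C a) := by
      rw [map_zero, add_zero]; ring
    rcases hirr.isUnit_or_isUnit hfac with hu | hu
    · exact Polynomial.not_isUnit_X hu
    · refine Polynomial.not_isUnit_of_natDegree_pos _ ?_ hu
      simp [Polynomial.natDegree_X_add_C]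
  haveI : Fact (Irreducible (X ^ 2 + C a * X + C b)) := ⟨hirr⟩
  set q := Fintype.card Fq with hq
  set P : Fq[X] := X ^ 2 + C a * X + C b with hP
  have hPdeg : P.natDegree = 2 := by rw [hP]; compute_degree!
  rw [← AdjoinRoot.mk_eq_zero]
  set K := AdjoinRoot P with hK
  set A : Fq →+* K := AdjoinRoot.of P with hA
  set α : K := AdjoinRoot.root P with hαdef
  haveI : CharP K 2 := charP_of_injective_ringHom (A.injective) 2
  have hAinj : Function.Injective A := A.injective
  have hα : α ^ 2 + A a * α + A b = 0 := by
    have h := AdjoinRoot.eval₂_root P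
    rw [hP] at h
    simpa using h
  obtain ⟨n, hp2, hn⟩ := FiniteField.card Fq 2
  have hq0 : q ≠ 0 := Fintype.card_pos.ne'
  have h2 : (2 : K) = 0 := by
    have := CharP.cast_eq_zero K 2
    exact_mod_cast this
  have hfrob : ∀ x y : K, (x + y) ^ q = x ^ q + y ^ q := by
    intro x y
    rw [hq, hn]
    exact add_pow_char_pow x y 2 n
  have hconst : ∀ c : Fq, (A c) ^ q = A c := by
    intro c
    rw [← map_pow, FiniteField.pow_card]
  have hroot_q : (α ^ q) ^ 2 + A a * α ^ q + A b = 0 := by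
    have h0 : (α ^ 2 + A a * α + A b) ^ q = 0 := by rw [hα]; exact zero_pow hq0
    rw [hfrob, hfrob, mul_pow, hconst a, hconst b, ← pow_mul, mul_comm 2 q, pow_mul] at h0
    exact h0
  have factor : ∀ β : K, β ^ 2 + A a * β + A b = (β - α) * (β - (α + A a)) := by
    intro β
    linear_combination hα + (A a * β + α * β - α ^ 2 - A a * α) * h2
  have hne : α ^ q ≠ α := by
    intro h
    have hq1 : (1 : ℕ) < q := Fintype.one_lt_card
    set g : K[X] := X ^ q - X with hg
    have hg0 : g ≠ 0 := FiniteField.X_pow_card_sub_X_ne_zero K hq1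
    have hdeg : g.natDegree = q := FiniteField.X_pow_card_sub_X_natDegree_eq K hq1
    have hmem : ∀ x : K, x ^ q = x → x ∈ g.roots.toFinset := by
      intro x hx
      rw [Multiset.mem_toFinset, mem_roots hg0]
      simp [hg, IsRoot, hx]
    have hαnot : α ∉ (Finset.univ : Finset Fq).image A := by
      intro hmem'
      obtain ⟨c, -, hc⟩ := Finset.mem_image.mp hmem'
      have hc0 : P.eval c = 0 := by
        apply hAinj
        rw [map_zero]
        have hev : P.eval c = c ^ 2 + a * c + b := by rw [hP]; simp
        rw [hev, map_add, map_add, map_mul, map_pow, hc]; exact hα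
      obtain ⟨g', hg'⟩ := (dvd_iff_isRoot.mpr hc0)
      rcases hirr.isUnit_or_isUnit hg' with hu | hu
      · refine Polynomial.not_isUnit_of_natDegree_pos _ ?_ hu
        simp [Polynomial.natDegree_X_sub_C]
      · have hdg' : g'.natDegree = 0 := Polynomial.natDegree_eq_zero_of_isUnit hu
        have hXc : (X - C c : Fq[X]) ≠ 0 := X_sub_C_ne_zero c
        have hgne : g' ≠ 0 := by
          intro h0; rw [h0, mul_zero] at hg'; exact hirr.ne_zero hg'
        have := Polynomial.natDegree_mul hXc hgne
        rw [← hg', hPdeg, Polynomial.natDegree_X_sub_C, hdg'] at this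
        omega
    have hS : insert α ((Finset.univ : Finset Fq).image A) ⊆ g.roots.toFinset := by
      intro x hx
      rcases Finset.mem_insert.mp hx with rfl | hx
      · exact hmem _ h
      · obtain ⟨c, -, rfl⟩ := Finset.mem_image.mp hx
        exact hmem _ (hconst c)
    have hcard : q + 1 ≤ g.roots.toFinset.card := by
      have hle := Finset.card_le_card hS
      rwa [Finset.card_insert_of_notMem hαnot,
        Finset.card_image_of_injective _ hAinj, Finset.card_univ] at hle
    have hcard2 : g.roots.toFinset.card ≤ q :=
      le_trans (Multiset.toFinset_card_le _) ((Polynomial.card_roots' g).trans_eq hdeg)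
    omega
  have hαq : α ^ q = α + A a := by
    have hzero : (α ^ q - α) * (α ^ q - (α + A a)) = 0 := by
      rw [← factor]; exact hroot_q
    rcases mul_eq_zero.mp hzero with h | h
    · exact absurd (sub_eq_zero.mp h) hne
    · exact sub_eq_zero.mp h
  have hα0 : α ≠ 0 := by
    intro h0
    rw [h0] at hα
    simp at hα
    exact hb (hAinj (by rw [hα, map_zero]))
  have hbi : A b⁻¹ * A b = 1 := by
    rw [← map_mul, inv_mul_cancel₀ hb, map_one]
  -- the main computation
  have key : α ^ (q - 1) = A (a * b⁻¹) * α + A (a ^ 2 * b⁻¹ + 1) := by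
    apply mul_right_cancel₀ hα0
    rw [← pow_succ, Nat.sub_add_cancel Fintype.card_pos, hαq]
    rw [map_mul, map_add, map_mul, map_pow, map_one]
    linear_combination (A a * A b⁻¹) * hα - A a * hbi + (-(α * A a ^ 2 * A b⁻¹) - α ^ 2 * A a * A b⁻¹) * h2
  rw [map_sub, map_add, map_mul, map_pow, AdjoinRoot.mk_X]
  rw [AdjoinRoot.mk_C, AdjoinRoot.mk_C]
  rw [sub_eq_zero]
  exact key
end

section
/- Let q = 2^n and let σ be the Möbius transformation of P^1(F_q) given by σ(u) = (a^{-1} b u + b)/(u + a + a^{-1} b), where x^2 + a x + b is a primitive irreducible polynomial over F_q with a ≠ 0. Then the matrix M = [[a^{-1}b, b],[1, a + a^{-1}b]] ∈ GL_2(F_q) has image in PGL_2(F_q) of order exactly q + 1. -/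
/-!
Let `α` be a root of `p = X² + aX + b`, so that `K = F_q(α)` has `q²` elements and, `p` being
primitive, `α` generates the cyclic group `Kˣ`. The regular representation of `K` sends `α` to the
companion matrix `A` of `p` and embeds `Kˣ / F_qˣ`, a cyclic group of order `q + 1` generated by
the class of `α`, into `PGL₂(F_q)`. In characteristic two `M = a⁻¹ A²`, so the class of `M` is the
square of a generator of a group of odd order `q + 1`, hence has order `q + 1`.
-/

open Polynomial

theorem orderOf_mk_eq_card_quotient_of_orderOf_eq_card {G : Type*} [Group G] [Finite G] {g : G}
    (hg : orderOf g = Nat.card G) (N : Subgroup G) [N.Normal] :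
    orderOf (g : G ⧸ N) = Nat.card (G ⧸ N) := by
  have hgen : Subgroup.zpowers g = ⊤ :=
    Subgroup.eq_top_of_card_eq _ (by rw [Nat.card_zpowers, hg])
  refine orderOf_eq_card_of_forall_mem_zpowers fun x => ?_
  obtain ⟨y, rfl⟩ := QuotientGroup.mk_surjective x
  obtain ⟨k, rfl⟩ := Subgroup.mem_zpowers_iff.mp (hgen ▸ Subgroup.mem_top y)
  exact ⟨k, by simp⟩

theorem Polynomial.aeval_companion_quadratic {R : Type*} [CommRing R] (a b : R) :
    aeval !![0, -b; 1, -a] (X ^ 2 + C a * X + C b) = 0 := by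
  ext i j
  fin_cases i <;> fin_cases j <;> simp [sq, Algebra.algebraMap_eq_smul_one]
  ring

theorem Matrix.inv_smul_companion_quadratic_sq {F : Type*} [Field F] [CharP F 2] {a : F}
    (ha : a ≠ 0) (b : F) :
    a⁻¹ • !![0, -b; 1, -a] ^ 2 = !![a⁻¹ * b, b; 1, a + a⁻¹ * b] := by
  ext i j
  fin_cases i <;> fin_cases j <;> simp [sq, CharTwo.neg_eq] <;> field_simp
  ring

theorem AdjoinRoot.root_pow_eq_one_iff {R : Type*} [CommRing R] (f : R[X]) (e : ℕ) :
    root f ^ e = 1 ↔ f ∣ X ^ e - 1 := by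
  rw [← sub_eq_zero, ← mk_eq_zero, map_sub, map_pow, mk_X, map_one]

theorem AdjoinRoot.orderOf_root_of_isLeast {R : Type*} [CommRing R] {f : R[X]} {e : ℕ}
    (h : IsLeast {e : ℕ | 0 < e ∧ f ∣ X ^ e - 1} e) : orderOf (root f) = e :=
  (orderOf_eq_iff h.1.1).2 ⟨(root_pow_eq_one_iff f e).2 h.1.2,
    fun _ hm hm0 hpow => (h.2 ⟨hm0, (root_pow_eq_one_iff f _).1 hpow⟩).not_gt hm⟩

theorem AdjoinRoot.exists_units_coe_eq_root_of_isLeast {F : Type*} [Field F] {f : F[X]}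
    [Fact (Irreducible f)] [Finite (AdjoinRoot f)]
    (h : IsLeast {e : ℕ | 0 < e ∧ f ∣ X ^ e - 1} (Nat.card (AdjoinRoot f) - 1)) :
    ∃ α : (AdjoinRoot f)ˣ, (α : AdjoinRoot f) = root f ∧ orderOf α = Nat.card (AdjoinRoot f)ˣ := by
  obtain ⟨α, hα⟩ := (orderOf_pos_iff.1 ((orderOf_root_of_isLeast h).symm ▸ h.1.1)).isUnit
  exact ⟨α, hα, by rw [← orderOf_units, hα, orderOf_root_of_isLeast h, Nat.card_units]⟩

/-- Unlike `AdjoinRoot.liftAlgHom`, this allows a noncommutative target algebra. -/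
theorem AdjoinRoot.exists_algHom_root_eq {R A : Type*} [CommRing R] [Ring A] [Algebra R A]
    {f : R[X]} {x : A} (hx : aeval x f = 0) : ∃ φ : AdjoinRoot f →ₐ[R] A, φ (root f) = x :=
  ⟨Ideal.Quotient.liftₐ _ (aeval x) fun g hg => by
    obtain ⟨r, rfl⟩ := Ideal.mem_span_singleton'.1 hg
    rw [map_mul, hx, mul_zero], aeval_X x⟩

theorem card_quotient_units_range_of_finrank_eq_two (F K : Type*) [Field F] [Field K]
    [Algebra F K] [Finite K] (h : Module.finrank F K = 2) :
    Nat.card (Kˣ ⧸ (Units.map (algebraMap F K).toMonoidHom).range) = Nat.card F + 1 := by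
  have : Finite F := Finite.of_injective _ (algebraMap F K).injective
  have : Module.Finite F K := Module.finite_of_finrank_eq_succ h
  have hK : Nat.card K = Nat.card F ^ 2 := h ▸ Module.natCard_eq_pow_finrank
  have hrange : Nat.card (Units.map (algebraMap F K).toMonoidHom).range = Nat.card F - 1 := by
    rw [← Nat.card_congr (MonoidHom.ofInjective
      (Units.map_injective (algebraMap F K).injective)).toEquiv, Nat.card_units]
  have hlagrange :=
    (Units.map (algebraMap F K).toMonoidHom).range.card_eq_card_quotient_mul_card_subgroup
  rw [hrange, Nat.card_units, hK, ← one_pow 2, Nat.sq_sub_sq] at hlagrange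
  have := Finite.one_lt_card (α := F)
  exact (Nat.eq_of_mul_eq_mul_right (by omega) hlagrange).symm

section MatrixRepresentation

variable {F K n : Type*} [Field F] [Field K] [Algebra F K] [Fintype n] [DecidableEq n]
  [Nonempty n]

theorem unitsMap_mem_center_iff (φ : K →ₐ[F] Matrix n n F) (u : Kˣ) :
    Units.map φ.toMonoidHom u ∈ Subgroup.center (GL n F) ↔
      u ∈ (Units.map (algebraMap F K).toMonoidHom).range := by
  simp only [Matrix.GeneralLinearGroup.center_eq_range_scalar, MonoidHom.mem_range]
  refine exists_congr fun c => ?_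
  rw [Units.ext_iff, Units.ext_iff, ← φ.toRingHom.injective.eq_iff]
  simp [Matrix.scalar_apply, Matrix.algebraMap_eq_diagonal, Pi.algebraMap_def]

theorem orderOf_mk_unitsMap_center (φ : K →ₐ[F] Matrix n n F) (u : Kˣ) :
    orderOf (QuotientGroup.mk (Units.map φ.toMonoidHom u) : GL n F ⧸ Subgroup.center (GL n F)) =
      orderOf (u : Kˣ ⧸ (Units.map (algebraMap F K).toMonoidHom).range) := by
  refine orderOf_eq_orderOf_iff.2 fun k => ?_
  rw [← QuotientGroup.mk_pow, ← QuotientGroup.mk_pow, QuotientGroup.eq_one_iff,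
    QuotientGroup.eq_one_iff, ← map_pow, unitsMap_mem_center_iff]

end MatrixRepresentation

theorem stmt_6_general (n : ℕ) {Fq : Type*} [Field Fq] [Fintype Fq]
    (hq : Fintype.card Fq = 2 ^ n) (a b : Fq) (ha : a ≠ 0)
    (hirr : Irreducible (X ^ 2 + C a * X + C b))
    (hprim : IsLeast {e : ℕ | 0 < e ∧ (X ^ 2 + C a * X + C b) ∣ X ^ e - 1}
      (Fintype.card Fq ^ 2 - 1))
    (M : GL (Fin 2) Fq)
    (hM : (M : Matrix (Fin 2) (Fin 2) Fq) = !![a⁻¹ * b, b; 1, a + a⁻¹ * b]) :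
    orderOf (QuotientGroup.mk M :
      GL (Fin 2) Fq ⧸ Subgroup.center (GL (Fin 2) Fq)) = Fintype.card Fq + 1 := by
  have : Fact (Irreducible (X ^ 2 + C a * X + C b)) := ⟨hirr⟩
  have : CharP Fq 2 := charP_of_card_eq_prime_pow hq
  have hrank : Module.finrank Fq (AdjoinRoot (X ^ 2 + C a * X + C b)) = 2 := by
    rw [(AdjoinRoot.powerBasis hirr.ne_zero).finrank, AdjoinRoot.powerBasis_dim]
    compute_degree!
  have : Module.Finite Fq (AdjoinRoot (X ^ 2 + C a * X + C b)) :=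
    Module.finite_of_finrank_eq_succ hrank
  have : Finite (AdjoinRoot (X ^ 2 + C a * X + C b)) := Module.finite_of_finite Fq
  have hcard : Nat.card (AdjoinRoot (X ^ 2 + C a * X + C b)) = Fintype.card Fq ^ 2 := by
    rw [Module.natCard_eq_pow_finrank (K := Fq), hrank, Nat.card_eq_fintype_card]
  obtain ⟨α, hα_root, hα⟩ := AdjoinRoot.exists_units_coe_eq_root_of_isLeast (hcard ▸ hprim)
  obtain ⟨φ, hφ⟩ := AdjoinRoot.exists_algHom_root_eq (aeval_companion_quadratic a b)
  have hMα : M = Units.map φ.toMonoidHom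
      (Units.map (algebraMap Fq _).toMonoidHom (Units.mk0 a⁻¹ (inv_ne_zero ha)) * α ^ 2) := by
    rw [Units.ext_iff, hM, ← Matrix.inv_smul_companion_quadratic_sq ha, ← hφ, ← hα_root,
      Algebra.smul_def, ← φ.commutes, ← map_pow, ← map_mul]
    rfl
  have hq_even : Even (Fintype.card Fq) :=
    even_iff_two_dvd.2 ((CharP.cast_eq_zero_iff Fq 2 _).1 (Nat.cast_card_eq_zero Fq))
  have hodd : (Fintype.card Fq + 1).Coprime 2 := Nat.coprime_two_right.2 hq_even.add_one
  have hgen := orderOf_mk_eq_card_quotient_of_orderOf_eq_card hα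
    (Units.map (algebraMap Fq _).toMonoidHom).range
  rw [card_quotient_units_range_of_finrank_eq_two _ _ hrank, Nat.card_eq_fintype_card] at hgen
  rw [hMα, orderOf_mk_unitsMap_center, QuotientGroup.mk_mul,
    (QuotientGroup.eq_one_iff _).2 (MonoidHom.mem_range.2 ⟨_, rfl⟩), one_mul, QuotientGroup.mk_pow,
    Nat.Coprime.orderOf_pow (hgen ▸ hodd), hgen]

/-- Let `q = 2^n` and let `x^2 + a x + b` be a primitive irreducible polynomial over
`F_q` with `a ≠ 0`. Then the matrix `M = [[a⁻¹b, b], [1, a + a⁻¹b]] ∈ GL_2(F_q)`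
(which induces the Möbius transformation `u ↦ (a⁻¹ b u + b)/(u + a + a⁻¹ b)`)
has image in `PGL_2(F_q) = GL_2(F_q)/Z` of order exactly `q + 1`. -/
theorem stmt_6 (n : ℕ) (hn : 0 < n) {Fq : Type*} [Field Fq] [Fintype Fq]
    (hq : Fintype.card Fq = 2 ^ n) (a b : Fq) (ha : a ≠ 0)
    (hirr : Irreducible (X ^ 2 + C a * X + C b))
    (hprim : IsLeast {e : ℕ | 0 < e ∧ (X ^ 2 + C a * X + C b) ∣ X ^ e - 1}
      (Fintype.card Fq ^ 2 - 1))
    (M : GL (Fin 2) Fq)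
    (hM : (M : Matrix (Fin 2) (Fin 2) Fq) = !![a⁻¹ * b, b; 1, a + a⁻¹ * b]) :
    orderOf (QuotientGroup.mk M :
      GL (Fin 2) Fq ⧸ Subgroup.center (GL (Fin 2) Fq)) = Fintype.card Fq + 1 :=
  stmt_6_general n hq a b ha hirr hprim M hM
end

section
/- Let q = 2^n and let E = F_q(u) be a rational function field with an automorphism group Gal(E/K) cyclic of odd order q + 1, fixing a degree-2 place Q. If z ∈ L(Q) has ν_Q(z) = -1 (pole order exactly 1 at Q) and τ ∈ Gal(E/K) with τ ≠ id, then z + τ(z) ∉ F_q. -/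
/-!
From `z + τ z = c` we get `τ² z = z`, and since the order of `τ` divides the odd number `q + 1`,
already `τ z = z`. If `f` is the quadratic defining `Q`, the conditions on `z` make `z f = g` a
polynomial of degree at most `deg f = 2`, so `[F_q(X) : F_q(z)] ≤ max (deg g) (deg f) = 2`.
An automorphism fixing `z` is an `F_q(z)`-automorphism of `F_q(X)`, of which there are at most
`[F_q(X) : F_q(z)]`; hence `τ` has order at most `2`, which is impossible for an element of odd
order other than the identity.
-/

open Polynomial IsDedekindDomain IntermediateField

theorem MulAction.smul_eq_self_of_sq_smul_eq_self {G α : Type*} [Monoid G] [MulAction G α]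
    {g : G} (hg : Odd (orderOf g)) {x : α} (h : g ^ 2 • x = x) : g • x = x := by
  obtain ⟨k, hk⟩ := hg
  have hpow : (g ^ 2) ^ (k + 1) = g := by
    rw [← pow_mul, show 2 * (k + 1) = orderOf g + 1 by omega, pow_succ, pow_orderOf_eq_one,
      one_mul]
  rw [← hpow]
  exact (stabilizerSubmonoid G x).pow_mem h _

namespace IsDedekindDomain.HeightOneSpectrum

variable {R : Type*} [CommRing R] [IsDedekindDomain R] (K : Type*) [Field K] [Algebra R K]
  [IsFractionRing R K]

theorem exists_algebraMap_eq_mul_of_valuation_le {Q : HeightOneSpectrum R} {f : R}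
    (hQ : Q.asIdeal = Ideal.span {f}) {z : K} (hQz : Q.valuation K z ≤ WithZero.exp 1)
    (hreg : ∀ P : HeightOneSpectrum R, P ≠ Q → P.valuation K z ≤ 1) :
    ∃ g : R, algebraMap R K g = z * algebraMap R K f := by
  have hf : f ≠ 0 := by
    rintro rfl
    exact Q.ne_bot (by simpa using hQ)
  refine mem_integers_of_valuation_le_one K _ fun P => ?_
  rw [map_mul]
  by_cases hPQ : P = Q
  · subst hPQ
    rw [valuation_of_algebraMap, intValuation_singleton _ hf hQ]
    calc P.valuation K z * WithZero.exp (-1) ≤ WithZero.exp 1 * WithZero.exp (-1) :=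
          mul_le_mul_left hQz _
      _ = 1 := by rw [← WithZero.exp_add]; rfl
  · exact mul_le_one' (hreg P hPQ) (P.valuation_le_one f)

end IsDedekindDomain.HeightOneSpectrum

namespace RatFunc

variable {K : Type*} [Field K]

theorem ne_C_of_one_lt_valuation (Q : HeightOneSpectrum K[X]) {z : RatFunc K}
    (hz : 1 < Q.valuation (RatFunc K) z) (c : K) : z ≠ C c := by
  rintro rfl
  rw [← algebraMap_C] at hz
  exact (Q.valuation_le_one (K := RatFunc K) _).not_gt hz

theorem natDegree_le_of_algebraMap_eq_mul [DecidableEq (RatFunc K)] {z : RatFunc K}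
    (hz : inftyValuation K z ≤ 1) {f g : K[X]}
    (h : algebraMap K[X] (RatFunc K) g = z * algebraMap K[X] (RatFunc K) f) :
    g.natDegree ≤ f.natDegree := by
  rcases eq_or_ne g 0 with rfl | hg
  · simp
  have hf : f ≠ 0 := by
    rintro rfl
    simp [hg] at h
  have hdeg {p : K[X]} (hp : p ≠ 0) :
      inftyValuation K (algebraMap K[X] (RatFunc K) p) = WithZero.exp (p.natDegree : ℤ) :=
    inftyValuation.polynomial K hp
  have hval := congr(inftyValuation K $h)
  rw [map_mul, hdeg hg, hdeg hf] at hval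
  have : WithZero.exp (g.natDegree : ℤ) ≤ WithZero.exp (f.natDegree : ℤ) :=
    hval ▸ mul_le_of_le_one_left' hz
  exact_mod_cast WithZero.exp_le_exp.mp this

theorem finrank_adjoin_div_le {f : K[X]} (hf : f ≠ 0) (g : K[X]) :
    Module.finrank K⟮algebraMap K[X] (RatFunc K) g / algebraMap K[X] (RatFunc K) f⟯ (RatFunc K)
      ≤ max g.natDegree f.natDegree := by
  rw [finrank_eq_max_natDegree]
  refine max_le_max ?_ (natDegree_le_of_dvd (denom_div_dvd g f) hf)
  rcases eq_or_ne g 0 with rfl | hg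
  · simp
  · exact natDegree_le_of_dvd (num_div_dvd g hf) hg

theorem orderOf_le_finrank_adjoin {z : RatFunc K} (hz : ¬∃ c, z = C c)
    {σ : RatFunc K ≃ₐ[K] RatFunc K} (hσ : σ z = z) :
    orderOf σ ≤ Module.finrank K⟮z⟯ (RatFunc K) := by
  have : FiniteDimensional K⟮z⟯ (RatFunc K) := by
    refine Module.finite_of_finrank_pos ?_
    rw [finrank_eq_max_natDegree, Nat.pos_iff_ne_zero, Ne, Nat.max_eq_zero_iff, ← eq_C_iff]
    exact hz
  have : Finite (RatFunc K ≃ₐ[K⟮z⟯] RatFunc K) :=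
    Finite.of_injective _ AlgEquiv.coe_toAlgHom_injective
  have hσz : σ ∈ K⟮z⟯.fixingSubgroup := by
    have hext : σ.toAlgHom.comp K⟮z⟯.val = K⟮z⟯.val :=
      adjoin_algHom_ext K (by simpa using hσ)
    exact (mem_fixingSubgroup_iff _ _).mpr fun x hx => congr($hext ⟨x, hx⟩)
  calc orderOf σ = orderOf (fixingSubgroupEquiv K⟮z⟯ ⟨σ, hσz⟩) := by
        rw [MulEquiv.orderOf_eq, Subgroup.orderOf_mk]
    _ ≤ Nat.card (RatFunc K ≃ₐ[K⟮z⟯] RatFunc K) := orderOf_le_card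
    _ ≤ Nat.card (RatFunc K →ₐ[K⟮z⟯] RatFunc K) :=
        Nat.card_le_card_of_injective _ AlgEquiv.coe_toAlgHom_injective
    _ ≤ Module.finrank K⟮z⟯ (RatFunc K) := card_algHom_le_finrank _ _ _

end RatFunc

theorem stmt_9_general (n : ℕ) (hn : 0 < n) (Fq : Type) [Field Fq] [Fintype Fq]
    [DecidableEq (RatFunc Fq)] (hq : Fintype.card Fq = 2 ^ n) (a b : Fq)
    (Q : HeightOneSpectrum (Polynomial Fq))
    (hQ : Q.asIdeal = Ideal.span {X ^ 2 + C a * X + C b})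
    (G : Subgroup (RatFunc Fq ≃ₐ[Fq] RatFunc Fq))
    (hcard : Nat.card G = Fintype.card Fq + 1)
    (z : RatFunc Fq)
    (hpole : Q.valuation (RatFunc Fq) z =
      ((Multiplicative.ofAdd (1 : ℤ) : Multiplicative ℤ) : WithZero (Multiplicative ℤ)))
    (hreg : ∀ P : HeightOneSpectrum (Polynomial Fq), P ≠ Q → P.valuation (RatFunc Fq) z ≤ 1)
    (hreginf : FunctionField.inftyValuation Fq z ≤ 1)
    (τ : RatFunc Fq ≃ₐ[Fq] RatFunc Fq) (hτG : τ ∈ G) (hτ : τ ≠ 1) :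
    z + τ z ∉ Set.range (fun c : Fq => RatFunc.C c) := by
  rintro ⟨c, hc⟩
  have hodd : Odd (orderOf τ) := by
    refine Odd.of_dvd_nat ?_ (G.orderOf_dvd_natCard hτG)
    rw [hcard, hq]
    exact (Nat.even_pow.mpr ⟨even_two, hn.ne'⟩).add_one
  have hτz : τ z = z := by
    have hτz' : τ z = RatFunc.C c - z := eq_sub_of_add_eq' hc.symm
    refine MulAction.smul_eq_self_of_sq_smul_eq_self hodd ?_
    rw [pow_two, mul_smul, AlgEquiv.smul_def, AlgEquiv.smul_def, hτz', map_sub, hτz',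
      ← RatFunc.algebraMap_eq_C, τ.commutes, sub_sub_cancel]
  have hfdeg : (X ^ 2 + C a * X + C b : Fq[X]).natDegree = 2 := by compute_degree!
  set f : Fq[X] := X ^ 2 + C a * X + C b
  have hf : f ≠ 0 := ne_zero_of_natDegree_gt (hfdeg ▸ two_pos)
  obtain ⟨g, hg⟩ :=
    HeightOneSpectrum.exists_algebraMap_eq_mul_of_valuation_le (RatFunc Fq) hQ hpole.le hreg
  have hz : ¬∃ c, z = RatFunc.C c := by
    refine not_exists.mpr (RatFunc.ne_C_of_one_lt_valuation Q ?_)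
    rw [hpole]
    exact WithZero.exp_lt_exp.mpr (one_pos : (0 : ℤ) < 1)
  have hτ_le : orderOf τ ≤ 2 :=
    calc orderOf τ ≤ Module.finrank Fq⟮z⟯ (RatFunc Fq) :=
          RatFunc.orderOf_le_finrank_adjoin hz hτz
      _ ≤ max g.natDegree f.natDegree := by
        rw [eq_div_of_mul_eq (by simpa using hf) hg.symm]
        exact RatFunc.finrank_adjoin_div_le hf g
      _ ≤ 2 := max_le (hfdeg ▸ RatFunc.natDegree_le_of_algebraMap_eq_mul hreginf hg) hfdeg.le
  have hτ1 : orderOf τ ≠ 1 := mt orderOf_eq_one_iff.mp hτ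
  obtain ⟨k, hk⟩ := hodd
  omega

/-- Lemma 3.3 of the paper. Let `q = 2^n` and let `E = F_q(u)` be the rational function
field, with a group `G = Gal(E/K)` of `F_q`-automorphisms which is cyclic of (odd)
order `q + 1` and fixes the degree-2 place `Q` (given by an irreducible quadratic
`u^2 + au + b`), i.e. preserves the `Q`-adic valuation. If `z ∈ L(Q)` has `ν_Q(z) = -1`
(pole of order exactly 1 at `Q`; in Mathlib's multiplicative convention
`Q.valuation z = ofAdd 1`, regular at all other places including infinity) and
`τ ∈ G` with `τ ≠ id`, then `z + τ(z) ∉ F_q`. -/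
theorem stmt_9 (n : ℕ) (hn : 0 < n) (Fq : Type) [Field Fq] [Fintype Fq]
    [DecidableEq Fq] [DecidableEq (RatFunc Fq)] (hq : Fintype.card Fq = 2 ^ n) (a b : Fq)
    (hirr : Irreducible (X ^ 2 + C a * X + C b))
    (Q : HeightOneSpectrum (Polynomial Fq))
    (hQ : Q.asIdeal = Ideal.span {X ^ 2 + C a * X + C b})
    (G : Subgroup (RatFunc Fq ≃ₐ[Fq] RatFunc Fq))
    (hcyc : IsCyclic G) (hcard : Nat.card G = Fintype.card Fq + 1)
    (hfixQ : ∀ τ ∈ G, ∀ w : RatFunc Fq, Q.valuation (RatFunc Fq) (τ w) = Q.valuation (RatFunc Fq) w)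
    (z : RatFunc Fq)
    (hpole : Q.valuation (RatFunc Fq) z =
      ((Multiplicative.ofAdd (1 : ℤ) : Multiplicative ℤ) : WithZero (Multiplicative ℤ)))
    (hreg : ∀ P : HeightOneSpectrum (Polynomial Fq), P ≠ Q → P.valuation (RatFunc Fq) z ≤ 1)
    (hreginf : FunctionField.inftyValuation Fq z ≤ 1)
    (τ : RatFunc Fq ≃ₐ[Fq] RatFunc Fq) (hτG : τ ∈ G) (hτ : τ ≠ 1) :
    z + τ z ∉ Set.range (fun c : Fq => RatFunc.C c) :=
  stmt_9_general n hn Fq hq a b Q hQ G hcard z hpole hreg hreginf τ hτG hτ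
end

section
/- In the setting of the paper's equivalence relation on V (the 2-dimensional complement of F_q in L(Q), with Gal(E/K) cyclic of order q + 1 acting), each equivalence class of a nonzero element z ∈ V \ {0} has cardinality exactly q + 1, and consequently V \ {0} (of size q^2 - 1) decomposes into exactly q - 1 equivalence classes. -/
/-- Proposition 3.5, in the abstract setting of the paper's equivalence relation.
Let `q = 2^n`, let `W` contain the line of constants `L = F_q · one` and a
2-dimensional subspace `V` with `V ∩ L = 0` (so `V` is the complement of `F_q` in the
3-dimensional Riemann–Roch space `L(Q)= V ⊔ L`), and let `G = Gal(E/K)` be cyclic of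
order `q + 1`, acting `F_q`-linearly, stabilizing `V ⊔ L` and fixing `L` pointwise,
such that moreover `z + τ • z ∉ L` for all `z ∈ V \ {0}` and `τ ≠ 1` (Lemma 3.3).
Then each equivalence class `[z] = {w : ∃ τ ∈ G, w + τ(z) ∈ F_q}` of a nonzero `z ∈ V`
has cardinality exactly `q + 1`, and consequently `V \ {0}` (of size `q^2 - 1`)
decomposes into exactly `q - 1` equivalence classes. -/
theorem stmt_10 (n q : ℕ) (hn : 0 < n) (hq : q = 2 ^ n) {Fq W : Type*} [Field Fq]
    [Fintype Fq] (hcard : Fintype.card Fq = q) [AddCommGroup W] [Module Fq W]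
    (G : Type*) [Group G] [Fintype G] (hGcyc : IsCyclic G)
    (hG : Fintype.card G = q + 1)
    [DistribMulAction G W] [SMulCommClass G Fq W]
    (one : W) (hone : one ≠ 0)
    (L V : Submodule Fq W) (hL : L = Submodule.span Fq {one})
    (hdim : Module.finrank Fq V = 2) (hVL : V ⊓ L = ⊥)
    (hfix : ∀ (τ : G), ∀ x ∈ L, τ • x = x)
    (hstab : ∀ (τ : G), ∀ x ∈ V ⊔ L, τ • x ∈ V ⊔ L)
    (hkey : ∀ z : W, z ∈ V → z ≠ 0 → ∀ τ : G, τ ≠ 1 → z + τ • z ∉ L) :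
    (∀ z : V, z ≠ 0 →
      Nat.card {w : V // ∃ τ : G, (w : W) + τ • (z : W) ∈ L} = q + 1) ∧
    Nat.card (Quot (fun z₁ z₂ : {z : V // z ≠ 0} =>
      ∃ τ : G, ((z₁ : V) : W) + τ • ((z₂ : V) : W) ∈ L)) = q - 1 := by
  classical
  -- characteristic 2 facts
  have hq2 : 2 ≤ q := by
    subst hq; exact Nat.one_lt_two_pow_iff.mpr hn.ne'
  have hchar : ((2 : Fq)) = 0 := by
    have h := FiniteField.cast_card_eq_zero Fq
    rw [hcard, hq] at h
    have h2 : ((2 : Fq)) ^ n = 0 := by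
      have : (((2 : ℕ) ^ n : ℕ) : Fq) = 0 := h
      push_cast at this
      exact this
    exact pow_eq_zero_iff hn.ne' |>.mp h2
  have haddself : ∀ w : W, w + w = 0 := by
    intro w
    have h1 : (2 : Fq) • w = w + w := two_smul Fq w
    rw [hchar, zero_smul] at h1
    exact h1.symm
  have hLmem : ∀ (τ : G) (x : W), x ∈ L → τ • x ∈ L := by
    intro τ x hx
    rw [hfix τ x hx]; exact hx
  -- main counting lemma for equivalence classes
  have key1 : ∀ z : W, z ∈ V → z ≠ 0 →
      Nat.card {w : V // ∃ τ : G, (w : W) + τ • z ∈ L} = q + 1 := by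
    intro z hzV hz
    choose v hv l hl hvl using fun τ : G =>
      Submodule.mem_sup.mp (hstab τ z (Submodule.mem_sup_left hzV))
    have hmem : ∀ τ : G, (v τ) + τ • z ∈ L := by
      intro τ
      rw [← hvl τ, ← add_assoc, haddself, zero_add]
      exact hl τ
    let f : G → {w : V // ∃ τ : G, (w : W) + τ • z ∈ L} :=
      fun τ => ⟨⟨v τ, hv τ⟩, τ, hmem τ⟩
    have hbij : Function.Bijective f := by
      constructor
      · intro τ σ h
        have hvv : v τ = v σ := Subtype.ext_iff.mp (Subtype.ext_iff.mp h)
        have hsum : τ • z + σ • z ∈ L := by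
          have h1 : τ • z + σ • z = l τ + l σ := by
            rw [← hvl τ, ← hvl σ, hvv]
            abel_nf
            rw [show (2 : ℤ) • v σ = v σ + v σ by rw [two_zsmul], haddself, zero_add]
          rw [h1]; exact L.add_mem (hl τ) (hl σ)
        have h2 : z + (τ⁻¹ * σ) • z ∈ L := by
          have h3 : z + (τ⁻¹ * σ) • z = τ⁻¹ • (τ • z + σ • z) := by
            rw [smul_add, smul_smul, smul_smul, inv_mul_cancel, one_smul]
          rw [h3]; exact hLmem τ⁻¹ _ hsum
        by_contra hne
        exact hkey z hzV hz (τ⁻¹ * σ) (by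
          intro h1; exact hne (by rwa [inv_mul_eq_one] at h1)) h2
      · rintro ⟨⟨w, hwV⟩, τ, hw⟩
        refine ⟨τ, ?_⟩
        have h1 : w + v τ ∈ L := by
          have h2 : (w + v τ) + l τ ∈ L := by
            rw [add_assoc, hvl τ]; exact hw
          have h3 : w + v τ = ((w + v τ) + l τ) + l τ := by
            rw [add_assoc, haddself, add_zero]
          rw [h3]; exact L.add_mem h2 (hl τ)
        have h4 : w + v τ ∈ V ⊓ L := ⟨V.add_mem hwV (hv τ), h1⟩
        rw [hVL, Submodule.mem_bot] at h4
        have h5 : v τ = w := by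
          have := haddself w
          have h6 : w + v τ = w + w := by rw [h4, this]
          exact add_left_cancel h6
        exact Subtype.ext (Subtype.ext h5)
    rw [← Nat.card_eq_of_bijective f hbij, Nat.card_eq_fintype_card, hG]
  -- nonzeroness of class members
  have hnonzero : ∀ z : W, z ∈ V → z ≠ 0 → ∀ w : W,
      (∃ τ : G, w + τ • z ∈ L) → w = 0 → False := by
    intro z hzV hz w ⟨τ, hw⟩ hw0
    rw [hw0, zero_add] at hw
    have h1 : z ∈ L := by
      have h2 : τ⁻¹ • (τ • z) ∈ L := hLmem τ⁻¹ _ hw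
      rwa [smul_smul, inv_mul_cancel, one_smul] at h2
    have : z ∈ V ⊓ L := ⟨hzV, h1⟩
    rw [hVL, Submodule.mem_bot] at this
    exact hz this
  refine ⟨fun z hz => key1 (z : W) z.2 (by simpa using hz), ?_⟩
  -- Part 2
  set r : {z : V // z ≠ 0} → {z : V // z ≠ 0} → Prop :=
    fun z₁ z₂ => ∃ τ : G, ((z₁ : V) : W) + τ • ((z₂ : V) : W) ∈ L with hr
  have hWne : ∀ z : {z : V // z ≠ 0}, ((z : V) : W) ≠ 0 := by
    intro z
    simpa using z.2
  have hequiv : Equivalence r := by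
    constructor
    · intro a
      exact ⟨1, by rw [one_smul, haddself]; exact L.zero_mem⟩
    · rintro a b ⟨τ, h⟩
      refine ⟨τ⁻¹, ?_⟩
      have h1 : τ⁻¹ • (((a : V) : W) + τ • ((b : V) : W)) ∈ L := hLmem τ⁻¹ _ h
      rw [smul_add, smul_smul, inv_mul_cancel, one_smul] at h1
      rwa [add_comm]
    · rintro a b c ⟨τ, h1⟩ ⟨σ, h2⟩
      refine ⟨τ * σ, ?_⟩
      have h3 : ((a : V) : W) + (τ * σ) • ((c : V) : W) =
          (((a : V) : W) + τ • ((b : V) : W)) + τ • (((b : V) : W) + σ • ((c : V) : W)) := by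
        rw [smul_add, smul_smul]
        abel_nf
        rw [show (2 : ℤ) • (τ • ((b : V) : W)) = τ • ((b:V):W) + τ • ((b:V):W) by
          rw [two_zsmul], haddself]
        abel
      rw [h3]
      exact L.add_mem h1 (hLmem τ _ h2)
  -- finiteness
  haveI : Module.Finite Fq V := Module.finite_of_finrank_pos (by rw [hdim]; norm_num)
  haveI : Finite V := Module.finite_of_finite Fq
  haveI : Fintype V := Fintype.ofFinite V
  haveI : Finite (Quot r) := Finite.of_surjective (Quot.mk r) Quot.exists_rep
  haveI : Fintype (Quot r) := Fintype.ofFinite _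
  haveI : Fintype {z : V // z ≠ 0} := Subtype.fintype _
  -- fiber cardinality
  have hfiber : ∀ c : Quot r, Nat.card {a : {z : V // z ≠ 0} // Quot.mk r a = c} = q + 1 := by
    intro c
    obtain ⟨z, rfl⟩ := Quot.exists_rep c
    have e1 : {a : {z : V // z ≠ 0} // Quot.mk r a = Quot.mk r z} ≃
        {w : V // ∃ τ : G, (w : W) + τ • ((z : V) : W) ∈ L} := by
      refine Equiv.ofBijective (fun a => ⟨(a.1 : V), by
        have := (Quot.eq.mp a.2)
        exact (hequiv.eqvGen_iff).mp this⟩) ⟨?_, ?_⟩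
      · intro a b h
        simp only [Subtype.mk.injEq] at h
        exact Subtype.ext (Subtype.ext h)
      · rintro ⟨w, hw⟩
        have hw0 : w ≠ 0 := by
          intro h0
          exact hnonzero ((z : V) : W) (z : V).2 (hWne z) (w : W) hw (by
            rw [h0]; rfl)
        refine ⟨⟨⟨w, hw0⟩, ?_⟩, rfl⟩
        exact Quot.eq.mpr ((hequiv.eqvGen_iff).mpr hw)
    rw [Nat.card_congr e1]
    exact key1 ((z : V) : W) (z : V).2 (hWne z)
  -- count
  have htotal : Nat.card {z : V // z ≠ 0} = Nat.card (Quot r) * (q + 1) := by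
    have e2 : {z : V // z ≠ 0} ≃ Σ c : Quot r, {a : {z : V // z ≠ 0} // Quot.mk r a = c} :=
      (Equiv.sigmaFiberEquiv (Quot.mk r)).symm
    rw [Nat.card_congr e2, Nat.card_eq_fintype_card, Fintype.card_sigma]
    have : ∀ c : Quot r, Fintype.card {a : {z : V // z ≠ 0} // Quot.mk r a = c} = q + 1 := by
      intro c
      rw [← Nat.card_eq_fintype_card]
      exact hfiber c
    rw [Finset.sum_congr rfl (fun c _ => this c), Finset.sum_const, Finset.card_univ,
      smul_eq_mul, Nat.card_eq_fintype_card]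
  have hcardV : Fintype.card V = q ^ 2 := by
    rw [Module.card_eq_pow_finrank (K := Fq), hcard, hdim]
  have hcardα : Nat.card {z : V // z ≠ 0} = q ^ 2 - 1 := by
    rw [Nat.card_eq_fintype_card]
    have h2 := Fintype.card_subtype_compl (fun z : V => z = 0)
    simp only [Fintype.card_subtype_eq] at h2
    have h1 : Fintype.card {z : V // z ≠ 0} = Fintype.card V - 1 := h2
    rw [h1, hcardV]
  set N := Nat.card (Quot r) with hN
  have hE : q ^ 2 - 1 = N * (q + 1) := by rw [← hcardα, htotal]
  obtain ⟨m, rfl⟩ : ∃ m, q = m + 2 := ⟨q - 2, by omega⟩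
  have hE' : m * m + 4 * m + 3 = N * (m + 3) := by
    have e1 : (m + 2) ^ 2 = m * m + 4 * m + 4 := by ring
    rw [e1] at hE
    have e3 : (m + 2) + 1 = m + 3 := by omega
    rw [e3] at hE
    set k := m * m with hk
    omega
  have e2 : (m + 1) * (m + 3) = m * m + 4 * m + 3 := by ring
  have h8 : N * (m + 3) = (m + 1) * (m + 3) := by rw [e2]; exact hE'.symm
  have h9 : N = m + 1 := Nat.eq_of_mul_eq_mul_right (by omega) h8
  omega
end
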